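/- For φ(t) = (t−1)²(t+α)/t and ψ(t) = (t−1)²(t+β)/t² (the case of Lemma 6.1): if both φ' and ψ' vanish at two points of ℂ* distinct from t = 1 (i.e. the curve has three A₂ cusps), then α = 2 and β = 1/2. -/
import Mathlib


/-- For `φ(t) = (t−1)²(t+α)/t` and `ψ(t) = (t−1)²(t+β)/t²` with
`α, β ≠ −1`: if both `φ'` and `ψ'` vanish at two distinct points of `ℂ*` other than
`t = 1` (so the curve has three A₂ cusps), then `α = 2` and `β = 1/2`. -/
theorem three_cusps_forces_rudolph (α β : ℂ) (hα : α ≠ -1) (hβ : β ≠ -1)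
    (φ ψ : ℂ → ℂ)
    (hφ : ∀ t : ℂ, φ t = (t - 1) ^ 2 * (t + α) / t)
    (hψ : ∀ t : ℂ, ψ t = (t - 1) ^ 2 * (t + β) / t ^ 2)
    (t₂ t₃ : ℂ) (h20 : t₂ ≠ 0) (h30 : t₃ ≠ 0) (h21 : t₂ ≠ 1) (h31 : t₃ ≠ 1)
    (hne : t₂ ≠ t₃)
    (hd2 : deriv φ t₂ = 0 ∧ deriv ψ t₂ = 0)
    (hd3 : deriv φ t₃ = 0 ∧ deriv ψ t₃ = 0) :
    α = 2 ∧ β = 1 / 2 := by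
  have hφfun : φ = fun t => (t - 1) ^ 2 * (t + α) / t := funext hφ
  have hψfun : ψ = fun t => (t - 1) ^ 2 * (t + β) / t ^ 2 := funext hψ
  have hA : ∀ t : ℂ, t ≠ 0 → t ≠ 1 → deriv φ t = 0 → 2 * t ^ 2 + α * t + α = 0 := by
    intro t ht ht1 hder
    have hc : HasDerivAt (fun t : ℂ => (t - 1) ^ 2 * (t + α))
        ((2 * (t - 1) ^ 1 * 1) * (t + α) + (t - 1) ^ 2 * 1) t :=
      (((hasDerivAt_id t).sub_const 1).pow 2).mul ((hasDerivAt_id t).add_const α)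
    have hd : HasDerivAt φ
        ((((2 * (t - 1) ^ 1 * 1) * (t + α) + (t - 1) ^ 2 * 1) * t
          - ((t - 1) ^ 2 * (t + α)) * 1) / t ^ 2) t := by
      rw [hφfun]
      exact hc.div (hasDerivAt_id t) ht
    have h0 := hd.deriv
    rw [hder] at h0
    have ht2 : (t : ℂ) ^ 2 ≠ 0 := pow_ne_zero _ ht
    have hnum := (div_eq_zero_iff.mp h0.symm).resolve_right ht2
    have hfac : (t - 1) * (2 * t ^ 2 + α * t + α) = 0 := by linear_combination hnum
    exact (mul_eq_zero.mp hfac).resolve_left (sub_ne_zero.mpr ht1)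
  have hB : ∀ t : ℂ, t ≠ 0 → t ≠ 1 → deriv ψ t = 0 → t ^ 2 + t + 2 * β = 0 := by
    intro t ht ht1 hder
    have hc : HasDerivAt (fun t : ℂ => (t - 1) ^ 2 * (t + β))
        ((2 * (t - 1) ^ 1 * 1) * (t + β) + (t - 1) ^ 2 * 1) t :=
      (((hasDerivAt_id t).sub_const 1).pow 2).mul ((hasDerivAt_id t).add_const β)
    have hq : HasDerivAt (fun t : ℂ => t ^ 2) (2 * t ^ 1 * 1) t :=
      (hasDerivAt_id t).pow 2
    have hd : HasDerivAt ψ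
        ((((2 * (t - 1) ^ 1 * 1) * (t + β) + (t - 1) ^ 2 * 1) * t ^ 2
          - ((t - 1) ^ 2 * (t + β)) * (2 * t ^ 1 * 1)) / (t ^ 2) ^ 2) t := by
      rw [hψfun]
      exact hc.div hq (pow_ne_zero _ ht)
    have h0 := hd.deriv
    rw [hder] at h0
    have ht4 : ((t : ℂ) ^ 2) ^ 2 ≠ 0 := pow_ne_zero _ (pow_ne_zero _ ht)
    have hnum := (div_eq_zero_iff.mp h0.symm).resolve_right ht4
    have hfac : (t * (t - 1)) * (t ^ 2 + t + 2 * β) = 0 := by linear_combination hnum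
    exact (mul_eq_zero.mp hfac).resolve_left
      (mul_ne_zero ht (sub_ne_zero.mpr ht1))
  have hA2 := hA t₂ h20 h21 hd2.1
  have hA3 := hA t₃ h30 h31 hd3.1
  have hB2 := hB t₂ h20 h21 hd2.2
  have hB3 := hB t₃ h30 h31 hd3.2
  have hdne : t₂ - t₃ ≠ 0 := sub_ne_zero.mpr hne
  have hsum0 : (t₂ - t₃) * (t₂ + t₃ + 1) = 0 := by linear_combination hB2 - hB3
  have hsum : t₂ + t₃ + 1 = 0 := (mul_eq_zero.mp hsum0).resolve_left hdne
  have hα0 : (t₂ - t₃) * (2 * (t₂ + t₃) + α) = 0 := by linear_combination hA2 - hA3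
  have hα1 : 2 * (t₂ + t₃) + α = 0 := (mul_eq_zero.mp hα0).resolve_left hdne
  have hαval : α = 2 := by linear_combination hα1 - 2 * hsum
  refine ⟨hαval, ?_⟩
  subst hαval
  linear_combination hB2 / 2 - hA2 / 4
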